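/- arXiv:0807.0433 — 5 statements merged into one kernel-verified Lean document; each statement's English description precedes it below -/
import Mathlib

section
/- For every integer k ≥ 2 and every word w, maj_{k−1}(w) = maj_k(φ^{(k)}(w)). -/
/-!
Write `maj_k w` as a sum over positions `j` of a contribution `contrib k w j`: the
`k`-inversions `(i, j)` ending at `j`, plus the weight `j - k` of a `k`-descent `(j - k, j)`.
Since `γ_j^{(k)}` only moves letters at positions `≤ j - k + 1`, induction on the length reduces
the theorem to one step: after `γ_n^{(k)}`, the `k`-contributions of the positions `≤ n` add up
to the `k`-contributions of the positions `< n` before it plus the `(k-1)`-contribution of `n`.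

If `w_n` does not split `w_{n-k}, w_{n-k+1}`, these two contributions of `n` already agree and
`Γ_n` is empty. Otherwise `Γ_n` is a chain `n - k > n - 2k > ⋯` and `γ_n` swaps each pair
`(i, i+1)` with `i ∈ Γ_n`. Let `σ(i) = ±1` according as `w_i w_{i+1}` is an ascent or a descent
(`0` if `w_i = w_{i+1}`). Swapping the pair at `i` changes the contributions of `i` and `i+1`
by `σ(i) - σ(i-k)` when `i - k ∈ Γ_n` (this is where exactly one of `w_i, w_{i+1}` splitting
`w_{i-k}, w_{i-k+1}` is used), and by `σ(i)` at the bottom of the chain, where that condition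
fails. The changes telescope to `σ(n-k)`, which is what separates the two contributions of `n`.
-/


open scoped Classical

/-- `x` splits the pair `a`, `b` if `a ≤ x < b` or `b ≤ x < a`. -/
def Splits (x a b : ℕ) : Prop := (a ≤ x ∧ x < b) ∨ (b ≤ x ∧ x < a)

/-- `m ∈ Γ_j^{(k)}(w)`, where the word `w` is accessed with 1-based indices:
`j - k ∈ Γ_j^{(k)}(w)` when `w j` splits the pair `w (j-k), w (j-k+1)`, and for
`i ∈ Γ_j^{(k)}(w)`, also `i - k ∈ Γ_j^{(k)}(w)` when exactly one of `w i`, `w (i+1)`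
splits the pair `w (i-k), w (i-k+1)`. -/
def MemGamma (k : ℕ) (w : ℕ → ℕ) (j m : ℕ) : Prop :=
  1 ≤ m ∧ ∃ t : ℕ, m + (t + 1) * k = j ∧
    Splits (w j) (w (j - k)) (w (j - k + 1)) ∧
    ∀ s, 1 ≤ s → s ≤ t →
      Xor' (Splits (w (m + s * k)) (w (m + (s - 1) * k)) (w (m + (s - 1) * k + 1)))
           (Splits (w (m + s * k + 1)) (w (m + (s - 1) * k)) (w (m + (s - 1) * k + 1)))

/-- The map `γ_j^{(k)}`: interchange `w i` and `w (i+1)` for every `i ∈ Γ_j^{(k)}(w)`. -/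
noncomputable def gamW (k j : ℕ) (w : ℕ → ℕ) : ℕ → ℕ := fun p =>
  if MemGamma k w j p then w (p + 1)
  else if MemGamma k w j (p - 1) then w (p - 1)
  else w p

noncomputable def phiAux (k : ℕ) (w : ℕ → ℕ) : ℕ → ℕ → ℕ
  | 0 => w
  | j + 1 => gamW k (j + 1) (phiAux k w j)

/-- `φ^{(k)} = γ_n^{(k)} ∘ γ_{n-1}^{(k)} ∘ ⋯ ∘ γ_1^{(k)}` on words of length `n`. -/
noncomputable def phiW (k n : ℕ) (w : ℕ → ℕ) : ℕ → ℕ := phiAux k w n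

/-- 1-based access to the letters of a list word. -/
def wf (l : List ℕ) (i : ℕ) : ℕ := l.getD (i - 1) 0

/-- `φ^{(k)}` as an operation on list words. -/
noncomputable def phiL (k : ℕ) (l : List ℕ) : List ℕ :=
  List.ofFn (fun i : Fin l.length => phiW k l.length (wf l) (i.1 + 1))

/-- The `k`-descent set `Des_k(w) = {(i, i+k) : w i > w (i+k)}` of a word of length `n`,
recorded by its set of first components. -/
def DesKF (k n : ℕ) (w : ℕ → ℕ) : Finset ℕ :=
  (Finset.Icc 1 n).filter fun i => i + k ≤ n ∧ w (i + k) < w i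

/-- The `k`-inversion set `Inv_k(w) = {(i, j) : 0 < j - i < k and w i > w j}`. -/
def InvKF (k n : ℕ) (w : ℕ → ℕ) : Finset (ℕ × ℕ) :=
  ((Finset.Icc 1 n) ×ˢ (Finset.Icc 1 n)).filter fun p =>
    p.1 < p.2 ∧ p.2 - p.1 < k ∧ w p.2 < w p.1

/-- The `k`-major index `maj_k(w) = |Inv_k(w)| + Σ_{(i,i+k) ∈ Des_k(w)} i`. -/
def majKF (k n : ℕ) (w : ℕ → ℕ) : ℕ := (InvKF k n w).card + ∑ i ∈ DesKF k n w, i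

/-- The `k`-major index of a list word. -/
def majKL (k : ℕ) (l : List ℕ) : ℕ := majKF k l.length (wf l)

/-- The ordinary major index of a list word: the sum of the indices `i` with
`w i > w (i+1)`. -/
def majL (l : List ℕ) : ℕ :=
  ∑ i ∈ (Finset.Icc 1 l.length).filter (fun i => i + 1 ≤ l.length ∧ wf l (i + 1) < wf l i), i

/-- The ordinary inversion number of a list word: the number of pairs `i < j` with
`w i > w j`. -/
def invL (l : List ℕ) : ℕ :=
  (((Finset.Icc 1 l.length) ×ˢ (Finset.Icc 1 l.length)).filter fun p =>
    p.1 < p.2 ∧ wf l p.2 < wf l p.1).card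

open Finset

def ltInd (a b : ℕ) : ℤ := if a < b then 1 else 0

def ascentSign (w : ℕ → ℕ) (i : ℕ) : ℤ := ltInd (w i) (w (i + 1)) - ltInd (w (i + 1)) (w i)

/-- For `j ≤ k` the truncated weight `j - k` is `0`: no `k`-descent ends at `j`. -/
def contrib (k : ℕ) (w : ℕ → ℕ) (j : ℕ) : ℤ :=
  ∑ i ∈ Ico (j - k + 1) j, ltInd (w j) (w i) + ((j - k : ℕ) : ℤ) * ltInd (w j) (w (j - k))

section Splits

variable {x a b y : ℕ}

lemma ltInd_add_ltInd_of_splits (h : Splits x a b) :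
    ltInd x a + ltInd a b = ltInd x b + ltInd b a := by
  unfold Splits at h; unfold ltInd; split_ifs <;> omega

lemma ltInd_eq_of_not_splits (h : ¬ Splits x a b) : ltInd x a = ltInd x b := by
  unfold Splits at h; unfold ltInd; split_ifs <;> omega

lemma ltInd_add_ltInd_of_not_xor_splits (h : ¬ Xor (Splits x a b) (Splits y a b)) :
    ltInd y a + ltInd x b = ltInd x a + ltInd y b := by
  simp only [Xor, Splits, not_or, not_and_or, not_not] at h
  unfold ltInd; split_ifs <;> omega

lemma ltInd_add_ltInd_add_ltInd_of_xor_splits (h : Xor (Splits x a b) (Splits y a b)) :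
    ltInd y a + ltInd x a + ltInd a b = ltInd x b + ltInd y b + ltInd b a := by
  rcases h with ⟨h1, h2⟩ | ⟨h1, h2⟩ <;> unfold Splits at h1 h2 <;> unfold ltInd <;> split_ifs <;>
    omega

end Splits

section Contrib

variable {k : ℕ} {w w' : ℕ → ℕ}

@[simp] lemma contrib_zero : contrib k w 0 = 0 := by simp [contrib]

lemma contrib_congr {j : ℕ} (h : ∀ p, 1 ≤ p → j - k ≤ p → p ≤ j → w p = w' p) :
    contrib k w j = contrib k w' j := by
  rcases Nat.eq_zero_or_pos j with rfl | hj
  · simp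
  have hwj : w j = w' j := h j hj (Nat.sub_le j k) le_rfl
  unfold contrib
  congr 1
  · exact sum_congr rfl fun i hi => by
      rw [mem_Ico] at hi; rw [hwj, h i (by omega) (by omega) (by omega)]
  · rcases Nat.eq_zero_or_pos (j - k) with h0 | hpos
    · simp [h0]
    · rw [hwj, h (j - k) hpos le_rfl (Nat.sub_le j k)]

variable (k w)

lemma contrib_add (hk : 2 ≤ k) (L : ℕ) :
    contrib k w (L + k) = ltInd (w (L + k)) (w (L + 1))
      + ∑ i ∈ Ico (L + 2) (L + k), ltInd (w (L + k)) (w i) + L * ltInd (w (L + k)) (w L) := by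
  rw [contrib, Nat.add_sub_cancel, sum_eq_sum_Ico_succ_bot (by omega)]

lemma contrib_add_succ (hk : 2 ≤ k) (L : ℕ) :
    contrib k w (L + k + 1) = ltInd (w (L + k + 1)) (w (L + k))
      + ∑ i ∈ Ico (L + 2) (L + k), ltInd (w (L + k + 1)) (w i)
      + (L + 1 : ℕ) * ltInd (w (L + k + 1)) (w (L + 1)) := by
  rw [contrib, show L + k + 1 - k = L + 1 by omega, sum_Ico_succ_top (by omega)]
  ring

lemma contrib_pred_add (hk : 1 ≤ k) (L : ℕ) :
    contrib (k - 1) w (L + k) = ∑ i ∈ Ico (L + 2) (L + k), ltInd (w (L + k)) (w i)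
      + (L + 1 : ℕ) * ltInd (w (L + k)) (w (L + 1)) := by
  rw [contrib, show L + k - (k - 1) = L + 1 by omega]

lemma contrib_of_le {j : ℕ} (hj : j ≤ k) : contrib k w j = ∑ i ∈ Ico 1 j, ltInd (w j) (w i) := by
  simp [contrib, Nat.sub_eq_zero_of_le hj]

lemma contrib_succ_of_lt {j : ℕ} (hj : 1 ≤ j) (hjk : j < k) :
    contrib k w (j + 1) = ltInd (w (j + 1)) (w j) + ∑ i ∈ Ico 1 j, ltInd (w (j + 1)) (w i) := by
  rw [contrib_of_le k w hjk, sum_Ico_succ_top hj]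
  ring

end Contrib

section MajorIndex

variable (k n : ℕ) (w : ℕ → ℕ)

lemma card_invKF :
    ((InvKF k n w).card : ℤ) = ∑ j ∈ Icc 1 n, ∑ i ∈ Ico (j - k + 1) j, ltInd (w j) (w i) := by
  rw [InvKF, card_filter, Nat.cast_sum, sum_product_right]
  refine sum_congr rfl fun j hj => ?_
  rw [mem_Icc] at hj
  have hwin : (Icc 1 n).filter (fun i => i < j ∧ j - i < k) = Ico (j - k + 1) j := by
    ext i; simp only [mem_filter, mem_Icc, mem_Ico]; omega
  simp only [← hwin, sum_filter, ltInd, ite_and, Nat.cast_ite, Nat.cast_one, Nat.cast_zero]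

lemma sum_desKF :
    ((∑ i ∈ DesKF k n w, i : ℕ) : ℤ)
      = ∑ j ∈ Icc 1 n, ((j - k : ℕ) : ℤ) * ltInd (w j) (w (j - k)) := by
  have hshift : (DesKF k n w).map (addRightEmbedding k)
      = (Icc 1 n).filter (fun j => k < j ∧ w j < w (j - k)) := by
    ext j
    simp only [DesKF, mem_map, mem_filter, mem_Icc, addRightEmbedding_apply]
    constructor
    · rintro ⟨i, ⟨⟨hi1, -⟩, hik, hw⟩, rfl⟩
      exact ⟨⟨by omega, hik⟩, by omega, by simpa using hw⟩
    · rintro ⟨⟨-, hjn⟩, hkj, hw⟩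
      exact ⟨j - k, ⟨⟨by omega, by omega⟩, by omega, by rwa [Nat.sub_add_cancel hkj.le]⟩,
        Nat.sub_add_cancel hkj.le⟩
  have hsum : ∑ i ∈ DesKF k n w, i = ∑ j ∈ (DesKF k n w).map (addRightEmbedding k), (j - k) := by
    simp
  rw [hsum, hshift, sum_filter, Nat.cast_sum]
  refine sum_congr rfl fun j _ => ?_
  unfold ltInd
  split_ifs <;> simp_all

lemma majKF_eq_sum_contrib : (majKF k n w : ℤ) = ∑ j ∈ range (n + 1), contrib k w j := by
  rw [range_eq_Ico, sum_eq_sum_Ico_succ_bot (Nat.succ_pos n), contrib_zero, zero_add,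
    Nat.succ_eq_add_one, Ico_add_one_right_eq_Icc, majKF, Nat.cast_add, card_invKF, sum_desKF,
    ← sum_add_distrib]
  rfl

end MajorIndex

/-- The condition under which `i ∈ Γ` follows from `i + k ∈ Γ`. -/
def ChainLink (k : ℕ) (w : ℕ → ℕ) (i : ℕ) : Prop :=
  Xor (Splits (w (i + k)) (w i) (w (i + 1))) (Splits (w (i + k + 1)) (w i) (w (i + 1)))

section Gamma

variable {k : ℕ} {w : ℕ → ℕ} {j m m' L : ℕ}

lemma memGamma_iff : MemGamma k w j m ↔ 1 ≤ m ∧ ∃ t, m + (t + 1) * k = j ∧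
    Splits (w j) (w (j - k)) (w (j - k + 1)) ∧ ∀ s < t, ChainLink k w (m + s * k) := by
  refine and_congr_right fun _ => exists_congr fun t => and_congr_right fun _ =>
    and_congr_right fun _ => ⟨fun h s hs => ?_, fun h s hs1 hst => ?_⟩
  · have hlink := h (s + 1) (by omega) (by omega)
    rwa [Nat.add_sub_cancel, show m + (s + 1) * k = m + s * k + k by ring] at hlink
  · obtain ⟨s, rfl⟩ : ∃ s', s = s' + 1 := ⟨s - 1, by omega⟩
    have hlink := h s (by omega)
    rwa [Nat.add_sub_cancel, show m + (s + 1) * k = m + s * k + k by ring]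

lemma memGamma_of_splits (hL : 1 ≤ L) (hsplit : Splits (w (L + k)) (w L) (w (L + 1))) :
    MemGamma k w (L + k) L :=
  memGamma_iff.2 ⟨hL, 0, by ring, by rwa [Nat.add_sub_cancel], by simp⟩

namespace MemGamma

lemma one_le (h : MemGamma k w j m) : 1 ≤ m := h.1

lemma add_le (h : MemGamma k w j m) : m + k ≤ j := by
  obtain ⟨-, t, ht, -⟩ := h
  nlinarith

lemma base_splits (h : MemGamma k w j m) : Splits (w j) (w (j - k)) (w (j - k + 1)) := by
  obtain ⟨-, t, -, hs, -⟩ := h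
  exact hs

lemma add (h : MemGamma k w j m) (hlt : m + k < j) : MemGamma k w j (m + k) := by
  obtain ⟨hm, t, ht, hs, hc⟩ := memGamma_iff.1 h
  obtain ⟨t, rfl⟩ : ∃ t', t = t' + 1 := ⟨t - 1, by rcases t with _ | t <;> simp_all⟩
  refine memGamma_iff.2 ⟨by omega, t, by rw [← ht]; ring, hs, fun s hs => ?_⟩
  have hlink := hc (s + 1) (by omega)
  rwa [show m + (s + 1) * k = m + k + s * k by ring] at hlink

lemma chainLink (h : MemGamma k w j m) (hlt : m + k < j) : ChainLink k w m := by
  obtain ⟨-, t, ht, -, hc⟩ := memGamma_iff.1 h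
  have ht0 : 0 < t := by
    rcases t with _ | t
    · simp at ht; omega
    · omega
  simpa using hc 0 ht0

lemma of_add (h : MemGamma k w j (L + k)) (hL : 1 ≤ L) (hlink : ChainLink k w L) :
    MemGamma k w j L := by
  obtain ⟨-, t, ht, hs, hc⟩ := memGamma_iff.1 h
  refine memGamma_iff.2 ⟨hL, t + 1, by rw [← ht]; ring, hs, fun s hs => ?_⟩
  rcases s with _ | s
  · simpa using hlink
  · have hlink := hc s (by omega)
    rwa [show L + k + s * k = L + (s + 1) * k by ring] at hlink

lemma add_le_of_lt (h : MemGamma k w j m) (h' : MemGamma k w j m') (hlt : m < m') :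
    m + k ≤ m' := by
  obtain ⟨-, t, ht, -⟩ := h
  obtain ⟨-, t', ht', -⟩ := h'
  have htt : t' < t := by
    by_contra! hle
    nlinarith
  nlinarith

lemma sub_of_lt (hk : 0 < k) (h : MemGamma k w j m) (h' : MemGamma k w j m') (hlt : m < m') :
    MemGamma k w j (m' - k) := by
  induction hd : m' - m using Nat.strong_induction_on generalizing m with
  | _ d ih =>
  have hle := h.add_le_of_lt h' hlt
  rcases hle.eq_or_lt with heq | hlt'
  · rwa [← heq, Nat.add_sub_cancel]
  · exact ih (m' - (m + k)) (by omega) (h.add (by have := h'.add_le; omega)) hlt' rfl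

end MemGamma

end Gamma

section GammaMap

variable {k n : ℕ} {u : ℕ → ℕ} {p : ℕ}

lemma MemGamma.not_succ (hk : 2 ≤ k) (h : MemGamma k u n p) : ¬ MemGamma k u n (p + 1) :=
  fun h' => by have := h.add_le_of_lt h' (Nat.lt_succ_self p); omega

lemma gamW_of_memGamma (h : MemGamma k u n p) : gamW k n u p = u (p + 1) := by
  simp [gamW, h]

lemma gamW_succ_of_memGamma (hk : 2 ≤ k) (h : MemGamma k u n p) : gamW k n u (p + 1) = u p := by
  simp [gamW, h, h.not_succ hk]

lemma gamW_of_not_memGamma (h : ¬ MemGamma k u n p) (h' : ¬ MemGamma k u n (p - 1)) :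
    gamW k n u p = u p := by
  simp [gamW, h, h']

variable (k n u) in
noncomputable def gammaSwap (p : ℕ) : ℕ :=
  if MemGamma k u n p then p + 1 else if MemGamma k u n (p - 1) then p - 1 else p

lemma gamW_eq_comp : gamW k n u = u ∘ gammaSwap k n u := by
  funext p
  simp only [gamW, gammaSwap, Function.comp_apply]
  split_ifs <;> rfl

lemma gammaSwap_involutive (hk : 2 ≤ k) : Function.Involutive (gammaSwap k n u) := by
  intro p
  by_cases hp : MemGamma k u n p
  · simp [gammaSwap, hp, hp.not_succ hk]
  by_cases hp' : MemGamma k u n (p - 1)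
  · have := hp'.one_le
    simp [gammaSwap, hp, hp', Nat.sub_add_cancel (by omega : 1 ≤ p)]
  · simp [gammaSwap, hp, hp']

lemma sum_Ico_gamW (hk : 2 ≤ k) {a b : ℕ} (ha : ¬ MemGamma k u n (a - 1))
    (hb : ¬ MemGamma k u n (b - 1)) (f : ℕ → ℤ) :
    ∑ i ∈ Ico a b, f (gamW k n u i) = ∑ i ∈ Ico a b, f (u i) := by
  have hmaps : ∀ i ∈ Ico a b, gammaSwap k n u i ∈ Ico a b := by
    intro i hi
    rw [mem_Ico] at hi ⊢
    unfold gammaSwap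
    split_ifs with h h'
    · have : i ≠ b - 1 := fun e => hb (e ▸ h)
      omega
    · have : i - 1 ≠ a - 1 := fun e => ha (e ▸ h')
      have := h'.one_le
      omega
    · exact hi
  rw [gamW_eq_comp]
  exact sum_nbij' _ _ hmaps hmaps (fun i _ => gammaSwap_involutive hk i)
    (fun i _ => gammaSwap_involutive hk i) fun i _ => rfl

end GammaMap

section Pairs

variable {k : ℕ} {u v : ℕ → ℕ}

lemma contrib_pair_middle (hk : 2 ≤ k) {L : ℕ}
    (hA : v (L + k) = u (L + k + 1)) (hB : v (L + k + 1) = u (L + k))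
    (hA' : v L = u (L + 1)) (hB' : v (L + 1) = u L) (hwin : ∀ i ∈ Ico (L + 2) (L + k), v i = u i)
    (hlink : ChainLink k u L) :
    contrib k v (L + k) + contrib k v (L + k + 1)
      = contrib k u (L + k) + contrib k u (L + k + 1) + ascentSign u (L + k) - ascentSign u L := by
  have hN (x : ℕ) : ∑ i ∈ Ico (L + 2) (L + k), ltInd x (v i)
      = ∑ i ∈ Ico (L + 2) (L + k), ltInd x (u i) := sum_congr rfl fun i hi => by rw [hwin i hi]
  rw [contrib_add k v hk, contrib_add_succ k v hk, contrib_add k u hk, contrib_add_succ k u hk,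
    hA, hB, hA', hB', hN, hN, ascentSign, ascentSign]
  have := ltInd_add_ltInd_add_ltInd_of_xor_splits hlink
  push_cast
  linarith

lemma contrib_pair_bottom (hk : 2 ≤ k) {i : ℕ} (hi : 1 ≤ i)
    (hA : v i = u (i + 1)) (hB : v (i + 1) = u i) (hbelow : ∀ p < i, v p = u p)
    (hstop : ∀ L, L + k = i → 1 ≤ L → ¬ ChainLink k u L) :
    contrib k v i + contrib k v (i + 1) = contrib k u i + contrib k u (i + 1) + ascentSign u i := by
  have hN (a : ℕ) (x : ℕ) : ∑ p ∈ Ico a i, ltInd x (v p) = ∑ p ∈ Ico a i, ltInd x (u p) :=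
    sum_congr rfl fun p hp => by rw [hbelow p (mem_Ico.1 hp).2]
  rcases lt_or_ge i k with hik | hki
  · rw [contrib_of_le k v hik.le, contrib_succ_of_lt k v hi hik, contrib_of_le k u hik.le,
      contrib_succ_of_lt k u hi hik, hA, hB, hN, hN, ascentSign]
    ring
  obtain ⟨L, rfl⟩ : ∃ L, i = L + k := ⟨i - k, by omega⟩
  rw [contrib_add k v hk, contrib_add_succ k v hk, contrib_add k u hk, contrib_add_succ k u hk,
    hA, hB, hbelow L (by omega), hbelow (L + 1) (by omega), hN, hN, ascentSign]
  rcases Nat.eq_zero_or_pos L with rfl | hL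
  · push_cast
    ring
  · push_cast
    linear_combination (L : ℤ) * ltInd_add_ltInd_of_not_xor_splits (hstop L rfl hL)

lemma contrib_top (hk : 2 ≤ k) {L : ℕ}
    (hZ : v (L + k) = u (L + k)) (hA' : v L = u (L + 1)) (hB' : v (L + 1) = u L)
    (hwin : ∀ i ∈ Ico (L + 2) (L + k), v i = u i) (hsplit : Splits (u (L + k)) (u L) (u (L + 1))) :
    contrib k v (L + k) = contrib (k - 1) u (L + k) - ascentSign u L := by
  rw [contrib_add k v hk, contrib_pred_add k u (by omega), hZ, hA', hB',
    sum_congr rfl fun i hi => by rw [hwin i hi], ascentSign]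
  have := ltInd_add_ltInd_of_splits hsplit
  push_cast
  linarith

lemma contrib_eq_contrib_pred (hk : 2 ≤ k) {n : ℕ}
    (h : ¬ (k < n ∧ Splits (u n) (u (n - k)) (u (n - k + 1)))) :
    contrib k u n = contrib (k - 1) u n := by
  rcases lt_or_ge n k with hnk | hkn
  · rw [contrib_of_le k u hnk.le, contrib_of_le (k - 1) u (by omega)]
  obtain ⟨L, rfl⟩ : ∃ L, n = L + k := ⟨n - k, by omega⟩
  rw [contrib_add k u hk, contrib_pred_add k u (by omega)]
  rcases Nat.eq_zero_or_pos L with rfl | hL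
  · push_cast
    ring
  · have hns : ¬ Splits (u (L + k)) (u L) (u (L + 1)) := fun hs =>
      h ⟨by omega, by rwa [Nat.add_sub_cancel]⟩
    rw [ltInd_eq_of_not_splits hns]
    push_cast
    ring

end Pairs

section Telescoping

variable {k n : ℕ} {u : ℕ → ℕ}

lemma contrib_gamW_of_not_memGamma (hk : 2 ≤ k) {j : ℕ} (hjn : j < n)
    (hj : ¬ MemGamma k u n j) (hj' : ¬ MemGamma k u n (j - 1)) :
    contrib k (gamW k n u) j = contrib k u j := by
  have hjk : ¬ MemGamma k u n (j - k) := fun h => hj <| by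
    have := h.one_le
    simpa [Nat.sub_add_cancel (by omega : k ≤ j)] using h.add (by omega)
  have hjk' : ¬ MemGamma k u n (j - k - 1) := fun h => hj' <| by
    have := h.one_le
    simpa [show j - k - 1 + k = j - 1 by omega] using h.add (by omega)
  unfold contrib
  rw [gamW_of_not_memGamma hj hj', gamW_of_not_memGamma hjk hjk',
    sum_Ico_gamW hk (by rwa [Nat.add_sub_cancel]) hj' (ltInd (u j))]

lemma sum_range_contrib_gamW_sub (hk : 2 ≤ k) {i : ℕ} (hi : MemGamma k u n i) :
    ∑ j ∈ range (i + 2), (contrib k (gamW k n u) j - contrib k u j) = ascentSign u i := by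
  induction i using Nat.strong_induction_on with
  | _ i ih =>
  have hin := hi.add_le
  by_cases hprev : MemGamma k u n (i - k)
  · have := hprev.one_le
    obtain ⟨L, rfl⟩ : ∃ L, i = L + k := ⟨i - k, by omega⟩
    rw [Nat.add_sub_cancel] at hprev
    have hgap (p : ℕ) (hp : L < p) (hpk : p < L + k) : ¬ MemGamma k u n p := fun h => by
      have := hprev.add_le_of_lt h hp; omega
    have hzero : ∑ j ∈ Ico (L + 2) (L + k), (contrib k (gamW k n u) j - contrib k u j) = 0 := by
      refine sum_eq_zero fun p hp => sub_eq_zero.2 ?_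
      rw [mem_Ico] at hp
      exact contrib_gamW_of_not_memGamma hk (by omega) (hgap p (by omega) (by omega))
        (hgap _ (by omega) (by omega))
    rw [sum_range_succ, sum_range_succ, ← sum_range_add_sum_Ico _ (by omega : L + 2 ≤ L + k),
      ih L (by omega) hprev, hzero]
    have := contrib_pair_middle hk (gamW_of_memGamma hi) (gamW_succ_of_memGamma hk hi)
      (gamW_of_memGamma hprev) (gamW_succ_of_memGamma hk hprev)
      (fun p hp => by
        rw [mem_Ico] at hp
        exact gamW_of_not_memGamma (hgap p (by omega) (by omega)) (hgap _ (by omega) (by omega)))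
      (hprev.chainLink (by omega))
    linarith
  · have hbelow (p : ℕ) (hp : p < i) : ¬ MemGamma k u n p :=
      fun h => hprev (h.sub_of_lt (by omega) hi hp)
    have hstop (L : ℕ) (hL : L + k = i) (hL1 : 1 ≤ L) : ¬ ChainLink k u L := fun hlink =>
      hprev <| by rw [← hL, Nat.add_sub_cancel]; exact (hL ▸ hi).of_add hL1 hlink
    have hzero : ∑ j ∈ range i, (contrib k (gamW k n u) j - contrib k u j) = 0 := by
      refine sum_eq_zero fun p hp => sub_eq_zero.2 ?_
      rw [mem_range] at hp
      exact contrib_gamW_of_not_memGamma hk (by omega) (hbelow p hp) (hbelow _ (by omega))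
    rw [sum_range_succ, sum_range_succ, hzero]
    have := contrib_pair_bottom hk hi.one_le (gamW_of_memGamma hi) (gamW_succ_of_memGamma hk hi)
      (fun p hp => gamW_of_not_memGamma (hbelow p hp) (hbelow _ (by omega))) hstop
    linarith

lemma sum_range_contrib_gamW (hk : 2 ≤ k) (n : ℕ) (u : ℕ → ℕ) :
    ∑ j ∈ range (n + 1), contrib k (gamW k n u) j
      = ∑ j ∈ range n, contrib k u j + contrib (k - 1) u n := by
  rw [sum_range_succ]
  by_cases hbase : k < n ∧ Splits (u n) (u (n - k)) (u (n - k + 1))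
  · obtain ⟨hkn, hsplit⟩ := hbase
    obtain ⟨L, rfl⟩ : ∃ L, n = L + k := ⟨n - k, by omega⟩
    rw [Nat.add_sub_cancel] at hsplit
    have htop : MemGamma k u (L + k) L := memGamma_of_splits (by omega) hsplit
    have habove (p : ℕ) (hp : L < p) : ¬ MemGamma k u (L + k) p := fun h => by
      have := h.add_le; omega
    have hsum : ∑ j ∈ range (L + k), (contrib k (gamW k (L + k) u) j - contrib k u j)
        = ascentSign u L := by
      rw [← sum_range_add_sum_Ico _ (by omega : L + 2 ≤ L + k), sum_range_contrib_gamW_sub hk htop,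
        add_eq_left]
      refine sum_eq_zero fun p hp => sub_eq_zero.2 ?_
      rw [mem_Ico] at hp
      exact contrib_gamW_of_not_memGamma hk (by omega) (habove p (by omega)) (habove _ (by omega))
    have := contrib_top hk (gamW_of_not_memGamma (habove _ (by omega)) (habove _ (by omega)))
      (gamW_of_memGamma htop) (gamW_succ_of_memGamma hk htop)
      (fun p hp => by
        rw [mem_Ico] at hp
        exact gamW_of_not_memGamma (habove p (by omega)) (habove _ (by omega))) hsplit
    rw [sum_sub_distrib] at hsum
    linarith
  · have hnone (p : ℕ) : ¬ MemGamma k u n p := fun h =>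
      hbase ⟨by have := h.one_le; have := h.add_le; omega, h.base_splits⟩
    rw [show gamW k n u = u from funext fun p => gamW_of_not_memGamma (hnone p) (hnone (p - 1)),
      contrib_eq_contrib_pred hk hbase]

end Telescoping

lemma phiAux_of_le {k : ℕ} (w : ℕ → ℕ) {j p : ℕ} (h : j + 2 ≤ p + k) : phiAux k w j p = w p := by
  induction j with
  | zero => rfl
  | succ j ih =>
    have hp : ¬ MemGamma k (phiAux k w j) (j + 1) p := fun hm => by have := hm.add_le; omega
    have hp' : ¬ MemGamma k (phiAux k w j) (j + 1) (p - 1) := fun hm => by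
      have := hm.add_le; have := hm.one_le; omega
    rw [phiAux, gamW_of_not_memGamma hp hp', ih (by omega)]

lemma sum_range_contrib_phiAux {k : ℕ} (hk : 2 ≤ k) (w : ℕ → ℕ) (n : ℕ) :
    ∑ j ∈ range (n + 1), contrib (k - 1) w j = ∑ j ∈ range (n + 1), contrib k (phiAux k w n) j := by
  induction n with
  | zero => simp
  | succ n ih =>
    have hlast : contrib (k - 1) w (n + 1) = contrib (k - 1) (phiAux k w n) (n + 1) :=
      contrib_congr fun p _ hp _ => (phiAux_of_le w (by omega)).symm
    rw [sum_range_succ, ih, hlast, phiAux, sum_range_contrib_gamW hk]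

theorem majk_phi_general (k : ℕ) (hk : 2 ≤ k) (l : List ℕ) :
    majKL (k - 1) l = majKL k (phiL k l) := by
  have hlen : (phiL k l).length = l.length := List.length_ofFn
  have hwf (p : ℕ) (hp : 1 ≤ p) (hpl : p ≤ l.length) :
      phiW k l.length (wf l) p = wf (phiL k l) p := by
    rw [wf, phiL, List.getD_eq_getElem _ _ (by rw [List.length_ofFn]; omega), List.getElem_ofFn,
      Nat.sub_add_cancel hp]
  rw [← Nat.cast_inj (R := ℤ), majKL, majKL, majKF_eq_sum_contrib, majKF_eq_sum_contrib, hlen,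
    sum_range_contrib_phiAux hk]
  exact sum_congr rfl fun j hj =>
    contrib_congr fun p hp _ hpj => hwf p hp (by rw [mem_range] at hj; omega)

/-- For every integer `k ≥ 2` and every word `w`,
`maj_{k-1}(w) = maj_k(φ^{(k)}(w))`. -/
theorem majk_phi (k : ℕ) (hk : 2 ≤ k) (l : List ℕ) (hl : ∀ x ∈ l, 0 < x) :
    majKL (k - 1) l = majKL k (phiL k l) :=
  majk_phi_general k hk l
end

section
/- For every integer k ≥ 2, the map φ^{(k)} is a bijection from the set of words rearranging a fixed finite multiset M of positive integers to itself, with inverse given by ψ^{(k)}(w) = γ_1^{(k)} ∘ ⋯ ∘ γ_{n−1}^{(k)} ∘ γ_n^{(k)}(w). -/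
open scoped Classical

noncomputable def psiAux (k n : ℕ) (w : ℕ → ℕ) : ℕ → ℕ → ℕ
  | 0 => w
  | j + 1 => gamW k (n - j) (psiAux k n w j)

/-- `ψ^{(k)} = γ_1^{(k)} ∘ ⋯ ∘ γ_{n-1}^{(k)} ∘ γ_n^{(k)}` on words of length `n`. -/
noncomputable def psiW (k n : ℕ) (w : ℕ → ℕ) : ℕ → ℕ := psiAux k n w n

/-- `ψ^{(k)}` as an operation on list words. -/
noncomputable def psiL (k : ℕ) (l : List ℕ) : List ℕ :=
  List.ofFn (fun i : Fin l.length => psiW k l.length (wf l) (i.1 + 1))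

/-!
For `k ≥ 2` every position of `Γ_j^{(k)}(w)` is congruent to `j` modulo `k`, so the transpositions
that `γ_j^{(k)}` performs act on disjoint pairs of adjacent positions. Membership in `Γ_j^{(k)}(w)`
only depends on the letter `w_j` and on these pairs taken as unordered pairs, because both
"splits" and "exactly one of … splits" are symmetric in the two letters of a pair. Hence
`Γ_j^{(k)}` is unchanged by `γ_j^{(k)}`, so `γ_j^{(k)}` is an involution permuting the letters of
`w`; `φ^{(k)}` and `ψ^{(k)}` compose the same involutions in opposite orders.
-/

open Function Set List

theorem perm_map_self_of_involutive {α : Type*} {l : List α} (hl : l.Nodup) {σ : α → α}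
    (hσ : Involutive σ) (hmaps : ∀ a ∈ l, σ a ∈ l) : l.map σ ~ l := by
  refine (perm_ext_iff_of_nodup (hl.map hσ.injective) hl).2 fun a => ⟨fun ha => ?_, fun ha => ?_⟩
  · obtain ⟨b, hb, rfl⟩ := mem_map.1 ha
    exact hmaps b hb
  · exact mem_map.2 ⟨σ a, hmaps a ha, hσ a⟩

theorem mem_range'_one_iff_mem_Icc {n p : ℕ} : p ∈ range' 1 n ↔ p ∈ Icc 1 n := by
  rw [mem_range'_1, mem_Icc]
  omega

section SwapPairs

variable {S : Set ℕ}

noncomputable def swapPairs (S : Set ℕ) (p : ℕ) : ℕ :=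
  if p ∈ S then p + 1 else if p - 1 ∈ S then p - 1 else p

theorem swapPairs_involutive (hS : ∀ p ∈ S, p + 1 ∉ S) : Involutive (swapPairs S) := by
  intro p
  by_cases hp : p ∈ S
  · simp [swapPairs, hp, hS p hp]
  · by_cases hp' : p - 1 ∈ S
    · have hp0 : p ≠ 0 := by rintro rfl; exact hp hp'
      obtain ⟨q, rfl⟩ := Nat.exists_eq_add_one_of_ne_zero hp0
      rw [Nat.add_sub_cancel] at hp'
      simp [swapPairs, hp, hp']
    · simp [swapPairs, hp, hp']

theorem swapPairs_mapsTo {n : ℕ} (hS : ∀ p ∈ S, 1 ≤ p ∧ p + 1 ≤ n) :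
    MapsTo (swapPairs S) (Icc 1 n) (Icc 1 n) := by
  intro p ⟨hp1, hpn⟩
  unfold swapPairs
  split_ifs with h h'
  · exact ⟨by omega, (hS p h).2⟩
  · exact ⟨(hS _ h').1, by omega⟩
  · exact ⟨hp1, hpn⟩

theorem swapPairs_pair {q : ℕ} (hpred : q - 1 ∉ S) (hsucc : q + 1 ∉ S) :
    s(swapPairs S q, swapPairs S (q + 1)) = s(q, q + 1) := by
  by_cases h : q ∈ S
  · simp [swapPairs, h, hsucc, Sym2.eq_swap]
  · simp [swapPairs, h, hpred, hsucc]

end SwapPairs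

section Splits

variable {x y x' y' a b a' b' : ℕ}

theorem splits_congr_of_sym2_eq (h : s(a', b') = s(a, b)) : Splits x a' b' ↔ Splits x a b := by
  rcases Sym2.eq_iff.1 h with ⟨rfl, rfl⟩ | ⟨rfl, rfl⟩
  · rfl
  · exact or_comm

theorem xor_splits_congr_of_sym2_eq (hxy : s(x', y') = s(x, y)) (hab : s(a', b') = s(a, b)) :
    Xor (Splits x' a' b') (Splits y' a' b') ↔ Xor (Splits x a b) (Splits y a b) := by
  simp only [splits_congr_of_sym2_eq hab]
  rcases Sym2.eq_iff.1 hxy with ⟨rfl, rfl⟩ | ⟨rfl, rfl⟩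
  · rfl
  · exact iff_of_eq (xor_comm _ _)

end Splits

section Gamma

variable {k j m : ℕ} {w : ℕ → ℕ}

def gammaSet (k j : ℕ) (w : ℕ → ℕ) : Set ℕ := {m | MemGamma k w j m}

theorem MemGamma.one_le_and_add_le (h : MemGamma k w j m) : 1 ≤ m ∧ m + k ≤ j := by
  obtain ⟨hm, t, rfl, -⟩ := h
  exact ⟨hm, by nlinarith⟩

theorem MemGamma.modEq (h : MemGamma k w j m) : m ≡ j [MOD k] := by
  obtain ⟨-, t, rfl, -⟩ := h
  exact (Nat.add_mul_mod_self_right m (t + 1) k).symm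

theorem not_succ_modEq_of_modEq (hk : 2 ≤ k) {q : ℕ} (h : q ≡ j [MOD k]) :
    ¬ q + 1 ≡ j [MOD k] := fun h' => by
  have h10 : 1 ≡ 0 [MOD k] := Nat.ModEq.add_left_cancel' q (h'.trans h.symm)
  rw [Nat.ModEq, Nat.mod_eq_of_lt (by omega), Nat.zero_mod] at h10
  exact one_ne_zero h10

theorem not_succ_mem_gammaSet (hk : 2 ≤ k) (h : m ∈ gammaSet k j w) :
    m + 1 ∉ gammaSet k j w := fun h' =>
  not_succ_modEq_of_modEq hk (MemGamma.modEq h) (MemGamma.modEq h')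

theorem gamW_eq_comp_s3 (k j : ℕ) (w : ℕ → ℕ) : gamW k j w = w ∘ swapPairs (gammaSet k j w) := by
  funext p
  simp only [gamW, swapPairs, gammaSet, comp_apply, mem_ofPred_eq]
  split_ifs <;> rfl

theorem memGamma_congr {w' : ℕ → ℕ} (hj : w' j = w j)
    (hpair : ∀ q c, 1 ≤ q → q + (c + 1) * k = j → s(w' q, w' (q + 1)) = s(w q, w (q + 1)))
    (m : ℕ) : MemGamma k w' j m ↔ MemGamma k w j m := by
  unfold MemGamma
  refine and_congr_right fun hm => exists_congr fun t => and_congr_right fun ht => ?_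
  subst ht
  have hpos : ∀ s ≤ t, m + s * k + (t - s + 1) * k = m + (t + 1) * k := by
    intro s hs
    obtain ⟨d, rfl⟩ := Nat.exists_eq_add_of_le hs
    rw [Nat.add_sub_cancel_left]
    ring
  have hjk : m + (t + 1) * k - k = m + t * k := by rw [add_mul, one_mul]; omega
  refine and_congr ?_ (forall_congr' fun s => imp_congr_right fun hs1 =>
    imp_congr_right fun hst => ?_)
  · rw [hj, hjk]
    exact splits_congr_of_sym2_eq (hpair _ 0 (by omega) (by ring))
  · exact xor_splits_congr_of_sym2_eq (hpair _ _ (by omega) (hpos s hst))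
      (hpair _ _ (by omega) (hpos (s - 1) (by omega)))

theorem gamW_apply_self (hk : 2 ≤ k) : gamW k j w j = w j := by
  have hj : j ∉ gammaSet k j w := fun h => by have := MemGamma.one_le_and_add_le h; omega
  have hj' : j - 1 ∉ gammaSet k j w := fun h => by have := MemGamma.one_le_and_add_le h; omega
  simp [gamW_eq_comp_s3, swapPairs, hj, hj']

theorem gamW_pair (hk : 2 ≤ k) {q : ℕ} (hq : 1 ≤ q) (hqj : q ≡ j [MOD k]) :
    s(gamW k j w q, gamW k j w (q + 1)) = s(w q, w (q + 1)) := by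
  have hpred : q - 1 ∉ gammaSet k j w := fun h =>
    not_succ_modEq_of_modEq hk (MemGamma.modEq h) (by rwa [Nat.sub_add_cancel hq])
  have hsucc : q + 1 ∉ gammaSet k j w := fun h =>
    not_succ_modEq_of_modEq hk hqj (MemGamma.modEq h)
  have := congrArg (Sym2.map w) (swapPairs_pair hpred hsucc)
  simpa [gamW_eq_comp_s3] using this

theorem gammaSet_gamW (hk : 2 ≤ k) : gammaSet k j (gamW k j w) = gammaSet k j w :=
  Set.ext <| memGamma_congr (gamW_apply_self hk) fun q c hq hqc =>
    gamW_pair hk hq (by subst hqc; exact (Nat.add_mul_mod_self_right q (c + 1) k).symm)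

theorem gamW_involutive (hk : 2 ≤ k) (j : ℕ) : Involutive (gamW k j) := by
  intro w
  rw [gamW_eq_comp_s3 k j (gamW k j w), gammaSet_gamW hk, gamW_eq_comp_s3, comp_assoc,
    (swapPairs_involutive fun _ => not_succ_mem_gammaSet hk).comp_self, comp_id]

theorem swapPairs_gammaSet_mapsTo (hk : 0 < k) {n : ℕ} (hj : j ≤ n) :
    MapsTo (swapPairs (gammaSet k j w)) (Icc 1 n) (Icc 1 n) :=
  swapPairs_mapsTo fun _ h => by have := MemGamma.one_le_and_add_le h; omega

theorem gamW_perm (hk : 2 ≤ k) {n : ℕ} (hj : j ≤ n) (w : ℕ → ℕ) :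
    (range' 1 n).map (gamW k j w) ~ (range' 1 n).map w := by
  rw [gamW_eq_comp_s3, ← map_map]
  refine (perm_map_self_of_involutive (nodup_range' _)
    (swapPairs_involutive fun _ => not_succ_mem_gammaSet hk) fun p hp => ?_).map w
  rw [mem_range'_one_iff_mem_Icc] at hp ⊢
  exact swapPairs_gammaSet_mapsTo (by omega) hj hp

theorem gamW_congr (hk : 0 < k) {n : ℕ} {v u : ℕ → ℕ} (hj : j ∈ Icc 1 n)
    (h : EqOn v u (Icc 1 n)) : EqOn (gamW k j v) (gamW k j u) (Icc 1 n) := by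
  have hjn : j ≤ n := hj.2
  have hΓ : gammaSet k j v = gammaSet k j u := Set.ext <| memGamma_congr (h hj) fun q c hq hqc => by
    have : k ≤ (c + 1) * k := Nat.le_mul_of_pos_left k c.succ_pos
    rw [h ⟨hq, by omega⟩, h (show q + 1 ∈ Icc 1 n from ⟨by omega, by omega⟩)]
  rw [gamW_eq_comp_s3, gamW_eq_comp_s3, hΓ]
  exact fun p hp => h (swapPairs_gammaSet_mapsTo hk hjn hp)

end Gamma

section Iterates

variable {k n : ℕ}

theorem phiAux_perm (hk : 2 ≤ k) (w : ℕ → ℕ) {j : ℕ} (hj : j ≤ n) :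
    (range' 1 n).map (phiAux k w j) ~ (range' 1 n).map w := by
  induction j with
  | zero => rfl
  | succ j ih => exact (gamW_perm hk hj _).trans (ih (by omega))

theorem psiAux_perm (hk : 2 ≤ k) (w : ℕ → ℕ) (d : ℕ) :
    (range' 1 n).map (psiAux k n w d) ~ (range' 1 n).map w := by
  induction d with
  | zero => rfl
  | succ d ih => exact (gamW_perm hk (Nat.sub_le n d) _).trans ih

theorem phiAux_congr (hk : 0 < k) {v u : ℕ → ℕ} (h : EqOn v u (Icc 1 n)) {j : ℕ} (hj : j ≤ n) :
    EqOn (phiAux k v j) (phiAux k u j) (Icc 1 n) := by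
  induction j with
  | zero => exact h
  | succ j ih => exact gamW_congr hk ⟨by omega, hj⟩ (ih (by omega))

theorem psiAux_congr (hk : 0 < k) {v u : ℕ → ℕ} (h : EqOn v u (Icc 1 n)) {d : ℕ} (hd : d ≤ n) :
    EqOn (psiAux k n v d) (psiAux k n u d) (Icc 1 n) := by
  induction d with
  | zero => exact h
  | succ d ih => exact gamW_congr hk ⟨by omega, by omega⟩ (ih (by omega))

theorem psiW_phiW (hk : 2 ≤ k) (n : ℕ) (w : ℕ → ℕ) : psiW k n (phiW k n w) = w := by
  have key : ∀ d ≤ n, psiAux k n (phiAux k w n) d = phiAux k w (n - d) := by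
    intro d hd
    induction d with
    | zero => rfl
    | succ d ih =>
      obtain ⟨i, hi⟩ : ∃ i, n - d = i + 1 := ⟨n - d - 1, by omega⟩
      rw [psiAux, ih (by omega), hi, phiAux, gamW_involutive hk, show n - (d + 1) = i by omega]
  simpa [psiW, phiW, phiAux] using key n le_rfl

theorem phiW_psiW (hk : 2 ≤ k) (n : ℕ) (w : ℕ → ℕ) : phiW k n (psiW k n w) = w := by
  have key : ∀ j ≤ n, phiAux k (psiW k n w) j = psiAux k n w (n - j) := by
    intro j hj
    induction j with
    | zero => rfl
    | succ j ih =>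
      obtain ⟨i, hi⟩ : ∃ i, n - j = i + 1 := ⟨n - j - 1, by omega⟩
      rw [phiAux, ih (by omega), hi, psiAux, show n - i = j + 1 by omega, gamW_involutive hk,
        show n - (j + 1) = i by omega]
  simpa [psiW, phiW, psiAux] using key n le_rfl

end Iterates

section Lists

variable {k : ℕ}

theorem ofFn_succ_eq_map_range' {α : Type*} (n : ℕ) (f : ℕ → α) :
    List.ofFn (fun i : Fin n => f (i.1 + 1)) = (range' 1 n).map f := by
  refine ext_getElem (by simp) fun i _ _ => ?_
  simp [getElem_range', Nat.add_comm]

theorem map_wf_range' (l : List ℕ) : (range' 1 l.length).map (wf l) = l := by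
  refine ext_getElem (by simp) fun i _ hi => ?_
  simp [wf, getElem_range', hi]

theorem wf_map_range' {n p : ℕ} (f : ℕ → ℕ) (hp : p ∈ Icc 1 n) :
    wf ((range' 1 n).map f) p = f p := by
  obtain ⟨i, rfl⟩ := Nat.exists_eq_add_of_le' hp.1
  have hi : i < n := by have := hp.2; omega
  simp [wf, getElem_range', hi, Nat.add_comm]

theorem phiL_eq_map (k : ℕ) (l : List ℕ) :
    phiL k l = (range' 1 l.length).map (phiW k l.length (wf l)) :=
  ofFn_succ_eq_map_range' _ _

theorem psiL_eq_map (k : ℕ) (l : List ℕ) :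
    psiL k l = (range' 1 l.length).map (psiW k l.length (wf l)) :=
  ofFn_succ_eq_map_range' _ _

theorem phiL_perm (hk : 2 ≤ k) (l : List ℕ) : phiL k l ~ l := by
  rw [phiL_eq_map]
  conv_rhs => rw [← map_wf_range' l]
  exact phiAux_perm hk _ le_rfl

theorem psiL_perm (hk : 2 ≤ k) (l : List ℕ) : psiL k l ~ l := by
  rw [psiL_eq_map]
  conv_rhs => rw [← map_wf_range' l]
  exact psiAux_perm hk _ _

theorem psiL_phiL (hk : 2 ≤ k) (l : List ℕ) : psiL k (phiL k l) = l := by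
  have hlen : (phiL k l).length = l.length := by simp [phiL]
  -- only on `Icc 1 n`: at position `0`, `wf` returns the first letter
  have hwf : EqOn (wf (phiL k l)) (phiW k l.length (wf l)) (Icc 1 l.length) := fun p hp => by
    rw [phiL_eq_map]; exact wf_map_range' _ hp
  rw [psiL_eq_map, hlen]
  conv_rhs => rw [← map_wf_range' l, ← psiW_phiW hk l.length (wf l)]
  exact map_congr_left fun p hp =>
    psiAux_congr (by omega) hwf le_rfl (mem_range'_one_iff_mem_Icc.1 hp)

theorem phiL_psiL (hk : 2 ≤ k) (l : List ℕ) : phiL k (psiL k l) = l := by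
  have hlen : (psiL k l).length = l.length := by simp [psiL]
  have hwf : EqOn (wf (psiL k l)) (psiW k l.length (wf l)) (Icc 1 l.length) := fun p hp => by
    rw [psiL_eq_map]; exact wf_map_range' _ hp
  rw [phiL_eq_map, hlen]
  conv_rhs => rw [← map_wf_range' l, ← phiW_psiW hk l.length (wf l)]
  exact map_congr_left fun p hp =>
    phiAux_congr (by omega) hwf le_rfl (mem_range'_one_iff_mem_Icc.1 hp)

end Lists

theorem phi_bijection_general (k : ℕ) (hk : 2 ≤ k) (M : Multiset ℕ) :
    (∀ l : List ℕ, (↑l : Multiset ℕ) = M → (↑(phiL k l) : Multiset ℕ) = M) ∧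
    (∀ l : List ℕ, (↑l : Multiset ℕ) = M → (↑(psiL k l) : Multiset ℕ) = M) ∧
    (∀ l : List ℕ, (↑l : Multiset ℕ) = M → psiL k (phiL k l) = l) ∧
    (∀ l : List ℕ, (↑l : Multiset ℕ) = M → phiL k (psiL k l) = l) :=
  ⟨fun l hl => (Multiset.coe_eq_coe.2 (phiL_perm hk l)).trans hl,
   fun l hl => (Multiset.coe_eq_coe.2 (psiL_perm hk l)).trans hl,
   fun l _ => psiL_phiL hk l, fun l _ => phiL_psiL hk l⟩

/-- For every `k ≥ 2`, the map `φ^{(k)}` is a bijection from the set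
of words rearranging a fixed finite multiset `M` of positive integers to itself, with
inverse `ψ^{(k)} = γ_1^{(k)} ∘ ⋯ ∘ γ_{n-1}^{(k)} ∘ γ_n^{(k)}`. -/
theorem phi_bijection (k : ℕ) (hk : 2 ≤ k) (M : Multiset ℕ) (hM : ∀ x ∈ M, 0 < x) :
    (∀ l : List ℕ, (↑l : Multiset ℕ) = M → (↑(phiL k l) : Multiset ℕ) = M) ∧
    (∀ l : List ℕ, (↑l : Multiset ℕ) = M → (↑(psiL k l) : Multiset ℕ) = M) ∧
    (∀ l : List ℕ, (↑l : Multiset ℕ) = M → psiL k (phiL k l) = l) ∧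
    (∀ l : List ℕ, (↑l : Multiset ℕ) = M → phiL k (psiL k l) = l) :=
  phi_bijection_general k hk M
end

section
/- For every integer k ≥ 2 and every word w of length n, one has φ^{(k)}(w)_n = w_n, and w_{n−k+1} > w_n if and only if φ^{(k)}(w)_{n−k} > φ^{(k)}(w)_n. -/
open scoped Classical

lemma memGamma_bound {k : ℕ} {w : ℕ → ℕ} {j m : ℕ} (h : MemGamma k w j m) :
    m + k ≤ j := by
  obtain ⟨-, t, heq, -⟩ := h
  have : k ≤ (t + 1) * k := Nat.le_mul_of_pos_left k (Nat.succ_pos t)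
  omega

lemma gamW_fix {k j p : ℕ} (w : ℕ → ℕ) (h : j + 1 < p + k) : gamW k j w p = w p := by
  have hA : ¬ MemGamma k w j p := fun hm => by
    have := memGamma_bound hm; omega
  have hB : ¬ MemGamma k w j (p - 1) := fun hm => by
    have := memGamma_bound hm; have := hm.1; omega
  simp [gamW, hA, hB]

lemma phiAux_fix {k : ℕ} (w : ℕ → ℕ) {j p : ℕ} (h : j + 1 < p + k) :
    phiAux k w j p = w p := by
  induction j with
  | zero => rfl
  | succ m ih =>
    show gamW k (m + 1) (phiAux k w m) p = w p
    rw [gamW_fix _ (by omega), ih (by omega)]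

lemma phiW_main {k n : ℕ} (w : ℕ → ℕ) (hk : 2 ≤ k) (hn : k < n) :
    phiW k n w n = w n ∧
      (w n < w (n - k + 1) ↔ phiW k n w n < phiW k n w (n - k)) := by
  obtain ⟨m, rfl⟩ : ∃ m, n = m + 1 := ⟨n - 1, by omega⟩
  set v := phiAux k w m with hv
  have hphi : phiW k (m + 1) w = gamW k (m + 1) v := rfl
  have hvn : v (m + 1) = w (m + 1) := phiAux_fix w (by omega)
  have hv1 : v (m + 1 - k + 1) = w (m + 1 - k + 1) := phiAux_fix w (by omega)
  have hA : ¬ MemGamma k v (m + 1) (m + 1) := fun hm => by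
    have := memGamma_bound hm; omega
  have hB : ¬ MemGamma k v (m + 1) m := fun hm => by
    have := memGamma_bound hm; omega
  have htop : phiW k (m + 1) w (m + 1) = w (m + 1) := by
    rw [hphi]; simp [gamW, hA, hB, hvn]
  refine ⟨htop, ?_⟩
  have hmem : MemGamma k v (m + 1) (m + 1 - k) ↔
      Splits (v (m + 1)) (v (m + 1 - k)) (v (m + 1 - k + 1)) := by
    constructor
    · rintro ⟨-, t, -, hs, -⟩; exact hs
    · intro hs
      have hkk : (0 + 1) * k = k := by ring
      exact ⟨by omega, 0, by omega, hs, fun s h1 h0 => by omega⟩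
  have hB2 : ¬ MemGamma k v (m + 1) (m + 1 - k - 1) := by
    rintro ⟨h1, t, heq, -⟩
    rcases t with _ | s
    · have : (0 + 1) * k = k := by ring
      omega
    · have h2 : 2 * k ≤ (s + 1 + 1) * k := Nat.mul_le_mul_right k (by omega)
      omega
  rw [htop, hphi]
  by_cases hs : Splits (v (m + 1)) (v (m + 1 - k)) (v (m + 1 - k + 1))
  · have : gamW k (m + 1) v (m + 1 - k) = v (m + 1 - k + 1) := by
      simp [gamW, hmem.mpr hs]
    rw [this, hv1]
  · have : gamW k (m + 1) v (m + 1 - k) = v (m + 1 - k) := by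
      have hA2 : ¬ MemGamma k v (m + 1) (m + 1 - k) := fun h => hs (hmem.mp h)
      simp [gamW, hA2, hB2]
    rw [this]
    rw [hvn, hv1] at hs
    unfold Splits at hs
    omega

lemma wf_phiL (k : ℕ) (l : List ℕ) {i : ℕ} (h1 : 1 ≤ i) (h2 : i ≤ l.length) :
    wf (phiL k l) i = phiW k l.length (wf l) i := by
  have hlen : (phiL k l).length = l.length := by simp [phiL]
  have hi : i - 1 < (phiL k l).length := by omega
  unfold wf
  rw [List.getD_eq_getElem _ _ hi]
  simp only [phiL, List.getElem_ofFn]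
  congr 1
  omega

/-- For `k ≥ 2` and a word `w` of length `n` (with the letters
`w_{n-k+1}`, `w_{n-k}` existing, i.e. `k < n`), `φ^{(k)}(w)_n = w_n`, and
`w_{n-k+1} > w_n` iff `φ^{(k)}(w)_{n-k} > φ^{(k)}(w)_n`. -/
theorem phi_last_letter (k : ℕ) (hk : 2 ≤ k) (l : List ℕ) (hl : ∀ x ∈ l, 0 < x)
    (hn : k < l.length) :
    wf (phiL k l) l.length = wf l l.length ∧
      (wf l l.length < wf l (l.length - k + 1) ↔
        wf (phiL k l) l.length < wf (phiL k l) (l.length - k)) := by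
  obtain ⟨hA, hB⟩ := phiW_main (wf l) hk hn
  rw [wf_phiL k l (by omega) le_rfl, wf_phiL k l (i := l.length - k) (by omega) (by omega)]
  exact ⟨hA, hB⟩
end

section
/- Let T be a standard Young tableau and suppose the entries i and i+1 lie in the same row or in the same column of T. Then no entry n > i+1 of T splits the pair i, i+1; that is, for every n, either both of i and i+1 attack n or neither does. -/
open scoped Classical

/-- Entry `i` attacks entry `n`: positions are recorded by `pos : ℕ → ℕ × ℕ`, the
cell `(pos e).1, (pos e).2` of entry `e` being its (row, column) pair where rows are
indexed so that strictly smaller first coordinate means strictly farther south and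
larger second coordinate means farther east.  Then `i` attacks `n` if `i` lies
strictly south and weakly east of `n`, or `i` lies strictly southwest of `n` and
`i + 1` attacks `n`; equivalently, there is `m` with `i ≤ m < n` such that each of
`i, …, m - 1` lies strictly southwest of `n` and `m` lies strictly south and weakly
east of `n`. -/
def AttacksP (pos : ℕ → ℕ × ℕ) (i n : ℕ) : Prop :=
  ∃ m, i ≤ m ∧ m < n ∧ (pos m).1 < (pos n).1 ∧ (pos n).2 ≤ (pos m).2 ∧
    ∀ t, i ≤ t → t < m → (pos t).1 < (pos n).1 ∧ (pos t).2 < (pos n).2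

/-- `n` splits the pair `a`, `b` if exactly one of `a`, `b` attacks `n`. -/
def SplitsP (pos : ℕ → ℕ × ℕ) (n a b : ℕ) : Prop :=
  Xor' (AttacksP pos a n) (AttacksP pos b n)

/-- `m ∈ Γ_j^{(k)}(T)`: `j - k ∈ Γ_j^{(k)}(T)` when `j` splits the pair
`j - k, j - k + 1`, and for `i ∈ Γ_j^{(k)}(T)`, also `i - k ∈ Γ_j^{(k)}(T)` when
exactly one of `i`, `i + 1` splits the pair `i - k, i - k + 1`. -/
def MemGammaT (k : ℕ) (pos : ℕ → ℕ × ℕ) (j m : ℕ) : Prop :=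
  1 ≤ m ∧ ∃ t : ℕ, m + (t + 1) * k = j ∧
    SplitsP pos j (j - k) (j - k + 1) ∧
    ∀ s, 1 ≤ s → s ≤ t →
      Xor' (SplitsP pos (m + s * k) (m + (s - 1) * k) (m + (s - 1) * k + 1))
           (SplitsP pos (m + s * k + 1) (m + (s - 1) * k) (m + (s - 1) * k + 1))

/-- `γ_j^{(k)}` on tableaux: interchange the entries `i` and `i + 1` (that is, swap
their positions) for every `i ∈ Γ_j^{(k)}(T)`. -/
noncomputable def gamT (k j : ℕ) (pos : ℕ → ℕ × ℕ) : ℕ → ℕ × ℕ := fun e =>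
  if MemGammaT k pos j e then pos (e + 1)
  else if MemGammaT k pos j (e - 1) then pos (e - 1)
  else pos e

noncomputable def PhiTAux (k : ℕ) (pos : ℕ → ℕ × ℕ) : ℕ → ℕ → ℕ × ℕ
  | 0 => pos
  | j + 1 => gamT k (j + 1) (PhiTAux k pos j)

/-- `Φ^{(k)} = γ_n^{(k)} ∘ γ_{n-1}^{(k)} ∘ ⋯ ∘ γ_1^{(k)}` on tableaux with `n` cells. -/
noncomputable def PhiT (k n : ℕ) (pos : ℕ → ℕ × ℕ) : ℕ → ℕ × ℕ := PhiTAux k pos n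

noncomputable def PsiTAux (k n : ℕ) (pos : ℕ → ℕ × ℕ) : ℕ → ℕ → ℕ × ℕ
  | 0 => pos
  | j + 1 => gamT k (n - j) (PsiTAux k n pos j)

/-- `Ψ^{(k)} = γ_1^{(k)} ∘ ⋯ ∘ γ_{n-1}^{(k)} ∘ γ_n^{(k)}` on tableaux with `n` cells. -/
noncomputable def PsiT (k n : ℕ) (pos : ℕ → ℕ × ℕ) : ℕ → ℕ × ℕ := PsiTAux k n pos n

/-- `pos` is (the position function, entry ↦ cell, of) a standard Young tableau of
shape `μ`: it maps `{1, …, |μ|}` bijectively onto the cells of `μ` (cells `(i, j)`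
of the Young diagram in coordinates where the first coordinate increases northward,
so that entries increase along rows and up columns iff entries increase with respect
to the componentwise order on cells). -/
def IsSYT (μ : YoungDiagram) (pos : ℕ → ℕ × ℕ) : Prop :=
  Set.BijOn pos (Set.Icc 1 μ.cells.card) ↑μ.cells ∧
    ∀ a b, a ∈ Set.Icc 1 μ.cells.card → b ∈ Set.Icc 1 μ.cells.card → a < b →
      ¬((pos b).1 ≤ (pos a).1 ∧ (pos b).2 ≤ (pos a).2)

/-- The `k`-descent set `Des_k(T) = {(i, i+k) : i attacks i + k}`, recorded by its
set of first components. -/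
noncomputable def DesKT (k n : ℕ) (pos : ℕ → ℕ × ℕ) : Finset ℕ :=
  (Finset.Icc 1 n).filter fun i => i + k ≤ n ∧ AttacksP pos i (i + k)

/-- The `k`-inversion set `Inv_k(T) = ∪_{j < k} Des_j(T)`, recorded as a set of
pairs `(i, i + j)` with `0 < j < k` and `i` attacking `i + j`. -/
noncomputable def InvKT (k n : ℕ) (pos : ℕ → ℕ × ℕ) : Finset (ℕ × ℕ) :=
  ((Finset.Icc 1 n) ×ˢ (Finset.Icc 1 n)).filter fun p =>
    p.1 < p.2 ∧ p.2 - p.1 < k ∧ AttacksP pos p.1 p.2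

/-- The `k`-major index `maj_k(T) = |Inv_k(T)| + Σ_{(i,i+k) ∈ Des_k(T)} i`. -/
noncomputable def majKT (k n : ℕ) (pos : ℕ → ℕ × ℕ) : ℕ :=
  (InvKT k n pos).card + ∑ i ∈ DesKT k n pos, i

lemma attacksP_step (pos : ℕ → ℕ × ℕ) (i n : ℕ) (h : i + 1 ≤ n) :
    AttacksP pos i n ↔ ((pos i).1 < (pos n).1 ∧ (pos n).2 ≤ (pos i).2) ∨
      (((pos i).1 < (pos n).1 ∧ (pos i).2 < (pos n).2) ∧ AttacksP pos (i + 1) n) := by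
  constructor
  · rintro ⟨m, him, hmn, h1, h2, ht⟩
    rcases eq_or_lt_of_le him with rfl | hlt
    · exact Or.inl ⟨h1, h2⟩
    · exact Or.inr ⟨ht i le_rfl hlt,
        ⟨m, hlt, hmn, h1, h2, fun t h1t h2t => ht t (le_trans (Nat.le_succ i) h1t) h2t⟩⟩
  · rintro (⟨h1, h2⟩ | ⟨⟨s1, s2⟩, m, him, hmn, h1, h2, ht⟩)
    · exact ⟨i, le_rfl, lt_of_lt_of_le (Nat.lt_succ_self i) h, h1, h2,
        fun t hti htm => absurd (lt_of_le_of_lt hti htm) (lt_irrefl _)⟩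
    · refine ⟨m, le_trans (Nat.le_succ i) him, hmn, h1, h2, fun t hti htm => ?_⟩
      rcases eq_or_lt_of_le hti with rfl | h'
      · exact ⟨s1, s2⟩
      · exact ht t h' htm

/-- If the entries `i` and `i + 1` of a standard Young tableau lie
in the same row or in the same column, then no entry `n > i + 1` splits the pair
`i`, `i + 1`: for every such `n`, either both of `i`, `i + 1` attack `n` or neither
does. -/
theorem same_row_col_not_split (μ : YoungDiagram) (pos : ℕ → ℕ × ℕ)
    (hT : IsSYT μ pos) (i : ℕ) (hi : 1 ≤ i) (hi2 : i + 1 ≤ μ.cells.card)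
    (hrc : (pos i).1 = (pos (i + 1)).1 ∨ (pos i).2 = (pos (i + 1)).2)
    (n : ℕ) (hn1 : i + 1 < n) (hn2 : n ≤ μ.cells.card) :
    ¬ SplitsP pos n i (i + 1) := by
  have hmem : ∀ a, 1 ≤ a → a ≤ μ.cells.card → a ∈ Set.Icc 1 μ.cells.card :=
    fun a h1 h2 => ⟨h1, h2⟩
  have hstd1 := hT.2 i (i + 1) (hmem i hi (by omega)) (hmem (i + 1) (by omega) hi2)
      (Nat.lt_succ_self i)
  have hstd2 := hT.2 (i + 1) n (hmem (i + 1) (by omega) hi2) (hmem n (by omega) hn2) hn1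
  have key : AttacksP pos i n ↔ AttacksP pos (i + 1) n := by
    rw [attacksP_step pos i n (le_of_lt hn1)]
    constructor
    · rintro (⟨h1, h2⟩ | ⟨_, hB⟩)
      · -- pos i strictly south, weakly east of pos n
        rcases hrc with hr | hc
        · -- same row: then c_{i+1} > c_i ≥ c_n, r_{i+1} = r_i < r_n
          have hc' : (pos i).2 < (pos (i + 1)).2 := by
            by_contra hcon
            exact hstd1 ⟨hr.ge, by omega⟩
          exact ⟨i + 1, le_rfl, hn1, hr ▸ h1, by omega,
            fun t h1t h2t => absurd (lt_of_le_of_lt h1t h2t) (lt_irrefl _)⟩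
        · -- same column: c_{i+1} = c_i ≥ c_n, so by standardness r_{i+1} < r_n
          have hr' : (pos (i + 1)).1 < (pos n).1 := by
            by_contra hcon
            exact hstd2 ⟨by omega, by omega⟩
          exact ⟨i + 1, le_rfl, hn1, hr', by omega,
            fun t h1t h2t => absurd (lt_of_le_of_lt h1t h2t) (lt_irrefl _)⟩
      · exact hB
    · intro hB
      -- pos (i+1) attacks n, so r_{i+1} < r_n (from any witness chain start)
      have hr1 : (pos (i + 1)).1 < (pos n).1 := by
        obtain ⟨m, him, hmn, h1, h2, ht⟩ := hB
        rcases eq_or_lt_of_le him with rfl | hlt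
        · exact h1
        · exact (ht (i + 1) le_rfl hlt).1
      have hri : (pos i).1 < (pos n).1 := by
        rcases hrc with hr | hc
        · omega
        · -- same column: r_i < r_{i+1} by standardness
          have : (pos i).1 < (pos (i + 1)).1 := by
            by_contra hcon
            exact hstd1 ⟨by omega, hc.ge⟩
          omega
      rcases le_or_gt (pos n).2 (pos i).2 with hc | hc
      · exact Or.inl ⟨hri, hc⟩
      · exact Or.inr ⟨⟨hri, hc⟩, hB⟩
  rintro (⟨ha, hb⟩ | ⟨hb, ha⟩)
  · exact hb (key.mp ha)
  · exact ha (key.mpr hb)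
end

section
/- Let k be a positive integer and let w be a permutation in which the letter i does not lie between i−1 and i+1 (so D_i^{(k)}(w) is defined). Then Des_k(w) = Des_k(D_i^{(k)}(w)) and |Inv_k(w)| = |Inv_k(D_i^{(k)}(w))|; in particular, Des_k and |Inv_k| are constant on k-equivalence classes. -/
open scoped Classical

/-- The letter `i` does not lie between `i - 1` and `i + 1` in the word `l`. -/
def NotBetween (l : List ℕ) (i : ℕ) : Prop :=
  (l.idxOf i < l.idxOf (i - 1) ∧ l.idxOf i < l.idxOf (i + 1)) ∨
  (l.idxOf (i - 1) < l.idxOf i ∧ l.idxOf (i + 1) < l.idxOf i)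

/-- Among `i - 1`, `i + 1`, the letter occurring at the extreme position on the
opposite side of `i` (assuming `i` does not lie between `i - 1` and `i + 1`). -/
def farL (l : List ℕ) (i : ℕ) : ℕ :=
  if l.idxOf i < l.idxOf (i - 1) then
    (if l.idxOf (i - 1) < l.idxOf (i + 1) then i + 1 else i - 1)
  else
    (if l.idxOf (i - 1) < l.idxOf (i + 1) then i - 1 else i + 1)

/-- Among `i - 1`, `i + 1`, the letter occurring in the middle position. -/
def midL (l : List ℕ) (i : ℕ) : ℕ := if farL l i = i - 1 then i + 1 else i - 1

/-- The involution `d_i`, sending `⋯ i ⋯ i±1 ⋯ i∓1 ⋯` to `⋯ i∓1 ⋯ i±1 ⋯ i ⋯`: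
it interchanges the letters `i` and `farL l i`, fixing all other letters. -/
def dMap (l : List ℕ) (i : ℕ) : List ℕ :=
  l.map (fun x => if x = i then farL l i else if x = farL l i then i else x)

/-- The involution `d̃_i`, sending `⋯ i ⋯ i±1 ⋯ i∓1 ⋯` to `⋯ i±1 ⋯ i∓1 ⋯ i ⋯`:
it replaces the letter `i` by `midL l i`, `midL l i` by `farL l i`, and `farL l i`
by `i`, fixing all other letters. -/
def dtMap (l : List ℕ) (i : ℕ) : List ℕ :=
  l.map (fun x =>
    if x = i then midL l i
    else if x = midL l i then farL l i
    else if x = farL l i then i else x)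

/-- `dist(i-1, i, i+1)`: the maximum distance between the positions of
`i - 1`, `i`, `i + 1` in `l`. -/
def distL (l : List ℕ) (i : ℕ) : ℕ :=
  max (max (l.idxOf (i - 1)) (l.idxOf i)) (l.idxOf (i + 1)) -
    min (min (l.idxOf (i - 1)) (l.idxOf i)) (l.idxOf (i + 1))

/-- `D_i^{(k)} = d_i` if `dist(i-1, i, i+1) > k`, and `D_i^{(k)} = d̃_i` if
`dist(i-1, i, i+1) ≤ k`. -/
def DMap (k : ℕ) (l : List ℕ) (i : ℕ) : List ℕ :=
  if k < distL l i then dMap l i else dtMap l i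

/-- `k`-equivalence: `w ∼_k u` if `w = D_{i₁}^{(k)} ⋯ D_{iₘ}^{(k)} (u)` for some
sequence `i₁, …, iₘ ≥ 2` of valid moves. -/
def EquivK (k : ℕ) : List ℕ → List ℕ → Prop :=
  Relation.ReflTransGen fun a b =>
    ∃ i, 2 ≤ i ∧ i + 1 ≤ a.length ∧ NotBetween a i ∧ b = DMap k a i

/-!
Transposing two consecutive values `x, x + 1` of a permutation changes the relative order of
exactly one pair of positions: the positions of `x` and `x + 1`. When `dist(i-1, i, i+1) > k`,
`d_i` is such a transposition of two letters more than `k` apart, so no comparison at distance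
`≤ k` changes, and `Des_k`, `Inv_k` stay the same. Otherwise `d̃_i` is the composite of two such
transpositions, first of `i` with the middle letter, then of `i` with the other one. Writing
`p < q < r` for the positions of the three letters, with the middle letter at `q`, this
exchanges the comparisons on the pairs `(p, q)` and `(q, r)` and keeps all others, in
particular the one on `(p, r)`. Both exchanged pairs are at distance `< k`, so `Des_k` is
unchanged and the exchange is a bijection between the `k`-inversions.
-/

open Equiv

section Window

variable {k n : ℕ} {w w' : ℕ → ℕ}

theorem desKF_congr (h : ∀ a, 1 ≤ a → a + k ≤ n → (w' (a + k) < w' a ↔ w (a + k) < w a)) :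
    DesKF k n w = DesKF k n w' := by
  unfold DesKF
  refine Finset.filter_congr fun a ha => and_congr_right fun hn => (h a ?_ hn).symm
  exact (Finset.mem_Icc.1 ha).1

theorem invKF_congr
    (h : ∀ a b, 1 ≤ a → a < b → b ≤ n → b - a < k → (w' b < w' a ↔ w b < w a)) :
    InvKF k n w = InvKF k n w' := by
  unfold InvKF
  refine Finset.filter_congr fun p hp => ?_
  simp only [Finset.mem_product, Finset.mem_Icc] at hp
  exact and_congr_right fun hlt => and_congr_right fun hk => (h _ _ hp.1.1 hlt hp.2.2 hk).symm

theorem card_invKF_eq_of_swap {q₁ q₂ q₃ : ℕ} (hq₁ : 1 ≤ q₁) (h₁₂ : q₁ < q₂) (h₂₃ : q₂ < q₃)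
    (hq₃ : q₃ ≤ n) (hk : q₃ - q₁ ≤ k)
    (h : ∀ a b, 1 ≤ a → a < b → b ≤ n → b - a < k → ¬(a = q₁ ∧ b = q₂) → ¬(a = q₂ ∧ b = q₃) →
      (w' b < w' a ↔ w b < w a))
    (h₁ : w' q₂ < w' q₁ ↔ w q₃ < w q₂) (h₂ : w' q₃ < w' q₂ ↔ w q₂ < w q₁) :
    (InvKF k n w).card = (InvKF k n w').card := by
  refine Finset.card_equiv (swap (q₁, q₂) (q₂, q₃)) fun p => ?_
  obtain ⟨a, b⟩ := p
  simp only [InvKF, Finset.mem_filter, Finset.mem_product, Finset.mem_Icc, swap_apply_def,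
    Prod.mk.injEq]
  split_ifs with hP hQ
  · obtain ⟨rfl, rfl⟩ := hP
    constructor <;> rintro ⟨-, -, hw⟩ <;> refine ⟨by omega, by omega, by omega, by tauto⟩
  · obtain ⟨rfl, rfl⟩ := hQ
    constructor <;> rintro ⟨-, -, hw⟩ <;> refine ⟨by omega, by omega, by omega, by tauto⟩
  · have hab := h a b
    constructor <;> rintro ⟨hrange, hlt, hk', hw⟩
    · exact ⟨hrange, hlt, hk', (hab (by omega) hlt (by omega) hk' hP hQ).2 hw⟩
    · exact ⟨hrange, hlt, hk', (hab (by omega) hlt (by omega) hk' hP hQ).1 hw⟩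

end Window

theorem swap_lt_swap_iff_of_adjacent {x y u v : ℕ} (hxy : x + 1 = y ∨ y + 1 = x)
    (huv : s(u, v) ≠ s(x, y)) : swap x y u < swap x y v ↔ u < v := by
  rw [Ne, Sym2.eq_iff] at huv
  simp only [swap_apply_def]
  split_ifs <;> omega

theorem List.idxOf_map_equiv {α β : Type*} [DecidableEq α] [DecidableEq β] (e : α ≃ β)
    (l : List α) (x : α) : (l.map e).idxOf (e x) = l.idxOf x := by
  induction l with
  | nil => simp
  | cons a l ih => simp [List.idxOf_cons, ih, cond_eq_ite]

section Word

variable {l : List ℕ}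

theorem mem_of_perm_range' {n x : ℕ} (hl : l.Perm (List.range' 1 n)) (h₁ : 1 ≤ x)
    (h₂ : x ≤ n) : x ∈ l :=
  hl.mem_iff.2 (List.mem_range'_1.2 ⟨h₁, by omega⟩)

theorem List.Nodup.map_swap_perm (hl : l.Nodup) {x y : ℕ} (hx : x ∈ l) (hy : y ∈ l) :
    (l.map (Equiv.swap x y)).Perm l := by
  refine (List.perm_ext_iff_of_nodup (hl.map (Equiv.swap x y).injective) hl).2 fun a => ?_
  rw [List.mem_map]
  constructor
  · rintro ⟨b, hb, rfl⟩
    rw [swap_apply_def]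
    split_ifs <;> assumption
  · intro ha
    refine ⟨Equiv.swap x y a, ?_, swap_apply_self x y a⟩
    rw [swap_apply_def]
    split_ifs <;> assumption

theorem wf_map (f : ℕ → ℕ) {p : ℕ} (hp₀ : 1 ≤ p) (hp : p ≤ l.length) :
    wf (l.map f) p = f (wf l p) := by
  have hp' : p - 1 < l.length := by omega
  rw [wf, wf, List.getD_eq_getElem _ _ (by simpa using hp'), List.getElem_map,
    List.getD_eq_getElem _ _ hp']

theorem wf_idxOf_add_one {x : ℕ} (hx : x ∈ l) : wf l (l.idxOf x + 1) = x := by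
  have h := List.idxOf_lt_length_iff.2 hx
  rw [wf, Nat.add_sub_cancel, List.getD_eq_getElem _ _ h, List.getElem_idxOf h]

theorem List.Nodup.wf_eq_iff (hl : l.Nodup) {p x : ℕ} (hp₀ : 1 ≤ p) (hp : p ≤ l.length) :
    wf l p = x ↔ p = l.idxOf x + 1 := by
  constructor
  · rintro rfl
    have hp' : p - 1 < l.length := by omega
    rw [wf, List.getD_eq_getElem _ _ hp', hl.idxOf_getElem]
    omega
  · rintro rfl
    exact wf_idxOf_add_one (List.idxOf_lt_length_iff.1 (by omega))

theorem wf_map_swap_lt_iff (hl : l.Nodup) {x y a b : ℕ} (hxy : x + 1 = y ∨ y + 1 = x)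
    (ha₀ : 1 ≤ a) (ha : a ≤ l.length) (hb₀ : 1 ≤ b) (hb : b ≤ l.length)
    (hab : s(a, b) ≠ s(l.idxOf x + 1, l.idxOf y + 1)) :
    wf (l.map (swap x y)) a < wf (l.map (swap x y)) b ↔ wf l a < wf l b := by
  rw [wf_map _ ha₀ ha, wf_map _ hb₀ hb]
  refine swap_lt_swap_iff_of_adjacent hxy fun h => hab ?_
  simpa only [Sym2.eq_iff, ← hl.wf_eq_iff ha₀ ha, ← hl.wf_eq_iff hb₀ hb] using h

theorem wf_map_swap_swap_lt_iff (hl : l.Nodup) {i m f : ℕ}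
    (hvals : (m + 1 = i ∧ i + 1 = f) ∨ (f + 1 = i ∧ i + 1 = m)) {a b : ℕ}
    (ha₀ : 1 ≤ a) (ha : a ≤ l.length) (hb₀ : 1 ≤ b) (hb : b ≤ l.length)
    (him : s(a, b) ≠ s(l.idxOf i + 1, l.idxOf m + 1))
    (hmf : s(a, b) ≠ s(l.idxOf m + 1, l.idxOf f + 1)) :
    wf ((l.map (swap i m)).map (swap i f)) a < wf ((l.map (swap i m)).map (swap i f)) b ↔
      wf l a < wf l b := by
  have hidx_i : (l.map (swap i m)).idxOf i = l.idxOf m := by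
    rw [← List.idxOf_map_equiv (swap i m) l m, swap_apply_right]
  have hidx_f : (l.map (swap i m)).idxOf f = l.idxOf f := by
    rw [← List.idxOf_map_equiv (swap i m) l f, swap_apply_of_ne_of_ne (by omega) (by omega)]
  have hlen : (l.map (swap i m)).length = l.length := List.length_map _
  rw [wf_map_swap_lt_iff (hl.map (swap i m).injective) (by omega) ha₀ (by omega) hb₀ (by omega)
    (by rwa [hidx_i, hidx_f])]
  exact wf_map_swap_lt_iff hl (by omega) ha₀ ha hb₀ hb him

end Word

section Invariance

variable {k : ℕ} {l : List ℕ}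

theorem desKF_invKF_map_swap_of_lt_dist (hl : l.Nodup) {x y : ℕ} (hxy : x + 1 = y ∨ y + 1 = x)
    (hfar : k < Nat.dist (l.idxOf x) (l.idxOf y)) :
    DesKF k l.length (wf l) = DesKF k l.length (wf (l.map (swap x y))) ∧
      InvKF k l.length (wf l) = InvKF k l.length (wf (l.map (swap x y))) := by
  have hcmp : ∀ a b, 1 ≤ a → a ≤ b → b ≤ l.length → b - a ≤ k →
      (wf (l.map (swap x y)) b < wf (l.map (swap x y)) a ↔ wf l b < wf l a) := by
    intro a b ha hab hb hk
    refine wf_map_swap_lt_iff hl hxy (by omega) hb ha (by omega) fun h => ?_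
    rw [Sym2.eq_iff] at h
    unfold Nat.dist at hfar
    omega
  exact ⟨desKF_congr fun a ha hn => hcmp a (a + k) ha (by omega) hn (by omega),
    invKF_congr fun a b ha hab hb hk => hcmp a b ha hab.le hb hk.le⟩

theorem desKF_card_invKF_map_swap_swap (hl : l.Nodup) {i m f : ℕ}
    (hvals : (m + 1 = i ∧ i + 1 = f) ∨ (f + 1 = i ∧ i + 1 = m))
    (hi : i ∈ l) (hm : m ∈ l) (hf : f ∈ l)
    (hbet : (l.idxOf i < l.idxOf m ∧ l.idxOf m < l.idxOf f) ∨
      (l.idxOf f < l.idxOf m ∧ l.idxOf m < l.idxOf i))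
    (hnear : Nat.dist (l.idxOf i) (l.idxOf f) ≤ k) :
    DesKF k l.length (wf l) = DesKF k l.length (wf ((l.map (swap i m)).map (swap i f))) ∧
      (InvKF k l.length (wf l)).card =
        (InvKF k l.length (wf ((l.map (swap i m)).map (swap i f)))).card := by
  set l' := (l.map (swap i m)).map (swap i f)
  have hlen : l'.length = l.length := by simp [l']
  have hpos' : ∀ x ∈ l, wf l' (l.idxOf x + 1) = swap i f (swap i m x) := fun x hx => by
    have := List.idxOf_lt_length_iff.2 hx
    rw [wf_map _ (by omega) (by simpa using this), wf_map _ (by omega) this,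
      wf_idxOf_add_one hx]
  have hw'i : wf l' (l.idxOf i + 1) = m := by
    rw [hpos' i hi, swap_apply_left, swap_apply_of_ne_of_ne (show m ≠ i by omega) (by omega)]
  have hw'm : wf l' (l.idxOf m + 1) = f := by rw [hpos' m hm, swap_apply_right, swap_apply_left]
  have hw'f : wf l' (l.idxOf f + 1) = i := by
    rw [hpos' f hf, swap_apply_of_ne_of_ne (show f ≠ i by omega) (by omega), swap_apply_right]
  have hcmp : ∀ a b, 1 ≤ a → a ≤ b → b ≤ l.length →
      ¬(a = l.idxOf i + 1 ∧ b = l.idxOf m + 1) → ¬(a = l.idxOf m + 1 ∧ b = l.idxOf i + 1) →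
      ¬(a = l.idxOf m + 1 ∧ b = l.idxOf f + 1) → ¬(a = l.idxOf f + 1 ∧ b = l.idxOf m + 1) →
      (wf l' b < wf l' a ↔ wf l b < wf l a) := fun a b ha hab hb h₁ h₂ h₃ h₄ =>
    wf_map_swap_swap_lt_iff hl hvals (by omega) hb ha (by omega)
      (by rw [Ne, Sym2.eq_iff]; omega) (by rw [Ne, Sym2.eq_iff]; omega)
  have hlt := List.idxOf_lt_length_iff.2 hi
  have hlt' := List.idxOf_lt_length_iff.2 hf
  unfold Nat.dist at hnear
  refine ⟨desKF_congr fun a ha hn => hcmp a (a + k) ha (by omega) hn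
    (by omega) (by omega) (by omega) (by omega), ?_⟩
  rcases hbet with ⟨h₁, h₂⟩ | ⟨h₁, h₂⟩
  · refine card_invKF_eq_of_swap (q₁ := l.idxOf i + 1) (q₂ := l.idxOf m + 1)
      (q₃ := l.idxOf f + 1) (by omega) (by omega) (by omega) (by omega) (by omega)
      (fun a b ha hab hb _ hne₁ hne₂ => hcmp a b ha hab.le hb hne₁ (by omega) hne₂ (by omega))
      ?_ ?_
    · rw [hw'i, hw'm, wf_idxOf_add_one hm, wf_idxOf_add_one hf]
    · rw [hw'm, hw'f, wf_idxOf_add_one hi, wf_idxOf_add_one hm]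
      omega
  · refine card_invKF_eq_of_swap (q₁ := l.idxOf f + 1) (q₂ := l.idxOf m + 1)
      (q₃ := l.idxOf i + 1) (by omega) (by omega) (by omega) (by omega) (by omega)
      (fun a b ha hab hb _ hne₁ hne₂ => hcmp a b ha hab.le hb (by omega) hne₂ (by omega) hne₁)
      ?_ ?_
    · rw [hw'm, hw'f, wf_idxOf_add_one hi, wf_idxOf_add_one hm]
      omega
    · rw [hw'i, hw'm, wf_idxOf_add_one hm, wf_idxOf_add_one hf]

end Invariance

section Moves

variable {k : ℕ} {l : List ℕ} {i : ℕ}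

theorem farL_midL_cases (l : List ℕ) (i : ℕ) :
    (farL l i = i + 1 ∧ midL l i = i - 1) ∨ (farL l i = i - 1 ∧ midL l i = i + 1) := by
  unfold midL farL
  split_ifs <;> omega

theorem farL_mem (hpred : i - 1 ∈ l) (hsucc : i + 1 ∈ l) : farL l i ∈ l := by
  rcases farL_midL_cases l i with ⟨h, -⟩ | ⟨h, -⟩ <;> rwa [h]

theorem midL_mem (hpred : i - 1 ∈ l) (hsucc : i + 1 ∈ l) : midL l i ∈ l := by
  rcases farL_midL_cases l i with ⟨-, h⟩ | ⟨-, h⟩ <;> rwa [h]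

theorem NotBetween.idxOf_midL_between (hnb : NotBetween l i) (hpred : i - 1 ∈ l) :
    (l.idxOf i < l.idxOf (midL l i) ∧ l.idxOf (midL l i) < l.idxOf (farL l i)) ∨
      (l.idxOf (farL l i) < l.idxOf (midL l i) ∧ l.idxOf (midL l i) < l.idxOf i) := by
  have hne : l.idxOf (i - 1) ≠ l.idxOf (i + 1) := fun he => by
    have := (List.idxOf_inj hpred).1 he
    omega
  unfold NotBetween at hnb
  unfold midL farL
  split_ifs <;> omega

theorem NotBetween.distL_eq_dist (hnb : NotBetween l i) (hpred : i - 1 ∈ l) :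
    distL l i = Nat.dist (l.idxOf i) (l.idxOf (farL l i)) := by
  have hbet := hnb.idxOf_midL_between hpred
  unfold distL Nat.dist
  rcases farL_midL_cases l i with ⟨hf, hm⟩ | ⟨hf, hm⟩ <;> simp only [hf, hm] at hbet ⊢ <;> omega

theorem dMap_eq_map_swap (l : List ℕ) (i : ℕ) : dMap l i = l.map (swap i (farL l i)) := rfl

theorem dtMap_eq_map_swap_swap (l : List ℕ) (hi : 1 ≤ i) :
    dtMap l i = (l.map (swap i (midL l i))).map (swap i (farL l i)) := by
  unfold dtMap
  rw [List.map_map]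
  congr
  funext x
  simp only [Function.comp_apply, swap_apply_def]
  rcases farL_midL_cases l i with ⟨hf, hm⟩ | ⟨hf, hm⟩ <;> rw [hf, hm] <;> split_ifs <;> omega

theorem DMap_perm (hl : l.Nodup) (hi : 1 ≤ i) (hpred : i - 1 ∈ l) (hmem : i ∈ l)
    (hsucc : i + 1 ∈ l) : (DMap k l i).Perm l := by
  have hf := farL_mem hpred hsucc
  have hmid := hl.map_swap_perm hmem (midL_mem hpred hsucc)
  unfold DMap
  split_ifs
  · exact hl.map_swap_perm hmem hf
  · rw [dtMap_eq_map_swap_swap l hi]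
    exact ((hl.map (swap i _).injective).map_swap_perm (hmid.mem_iff.2 hmem)
      (hmid.mem_iff.2 hf)).trans hmid

theorem desKF_card_invKF_DMap (hl : l.Nodup) (hi : 1 ≤ i) (hpred : i - 1 ∈ l) (hmem : i ∈ l)
    (hsucc : i + 1 ∈ l) (hnb : NotBetween l i) :
    DesKF k l.length (wf l) = DesKF k l.length (wf (DMap k l i)) ∧
      (InvKF k l.length (wf l)).card = (InvKF k l.length (wf (DMap k l i))).card := by
  have hfm := farL_midL_cases l i
  unfold DMap
  rw [hnb.distL_eq_dist hpred]
  split_ifs with hfar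
  · obtain ⟨hD, hI⟩ := desKF_invKF_map_swap_of_lt_dist hl (by omega) hfar
    exact ⟨hD, congrArg Finset.card hI⟩
  · rw [dtMap_eq_map_swap_swap l hi]
    exact desKF_card_invKF_map_swap_swap hl (by omega) hmem (midL_mem hpred hsucc)
      (farL_mem hpred hsucc) (hnb.idxOf_midL_between hpred) (not_lt.1 hfar)

theorem DMap_perm_range' {n : ℕ} (hl : l.Perm (List.range' 1 n)) (hi : 2 ≤ i)
    (hin : i + 1 ≤ n) : (DMap k l i).Perm (List.range' 1 n) :=
  (DMap_perm (hl.nodup_iff.2 List.nodup_range') (by omega)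
    (mem_of_perm_range' hl (by omega) (by omega)) (mem_of_perm_range' hl (by omega) (by omega))
    (mem_of_perm_range' hl (by omega) hin)).trans hl

theorem desKF_card_invKF_DMap_of_perm_range' {n : ℕ} (hl : l.Perm (List.range' 1 n))
    (hi : 2 ≤ i) (hin : i + 1 ≤ n) (hnb : NotBetween l i) :
    DesKF k n (wf l) = DesKF k n (wf (DMap k l i)) ∧
      (InvKF k n (wf l)).card = (InvKF k n (wf (DMap k l i))).card := by
  obtain rfl : l.length = n := by simpa using hl.length_eq
  exact desKF_card_invKF_DMap (hl.nodup_iff.2 List.nodup_range') (by omega)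
    (mem_of_perm_range' hl (by omega) (by omega)) (mem_of_perm_range' hl (by omega) (by omega))
    (mem_of_perm_range' hl (by omega) hin) hnb

end Moves

theorem Dk_preserves_desk_invk_general (k : ℕ) (n : ℕ) (l : List ℕ)
    (hl : l.Perm (List.range' 1 n)) (i : ℕ) (hi : 2 ≤ i) (hi2 : i + 1 ≤ n)
    (hnb : NotBetween l i) :
    (DesKF k n (wf l) = DesKF k n (wf (DMap k l i)) ∧
      (InvKF k n (wf l)).card = (InvKF k n (wf (DMap k l i))).card) ∧
    ∀ u : List ℕ, EquivK k l u →
      DesKF k n (wf l) = DesKF k n (wf u) ∧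
        (InvKF k n (wf l)).card = (InvKF k n (wf u)).card := by
  refine ⟨desKF_card_invKF_DMap_of_perm_range' hl hi hi2 hnb, fun u hu => ?_⟩
  suffices u.Perm (List.range' 1 n) ∧ DesKF k n (wf l) = DesKF k n (wf u) ∧
      (InvKF k n (wf l)).card = (InvKF k n (wf u)).card from this.2
  induction hu with
  | refl => exact ⟨hl, rfl, rfl⟩
  | tail _ hstep ih =>
    obtain ⟨hperm, hD, hI⟩ := ih
    obtain ⟨j, hj, hjn, hjnb, rfl⟩ := hstep
    have hjn' : j + 1 ≤ n := by simpa [hperm.length_eq] using hjn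
    obtain ⟨hD', hI'⟩ := desKF_card_invKF_DMap_of_perm_range' hperm hj hjn' hjnb
    exact ⟨DMap_perm_range' hperm hj hjn', hD.trans hD', hI.trans hI'⟩

/-- For a positive integer `k` and a permutation `w` of `1, …, n`
in which the letter `i` does not lie between `i - 1` and `i + 1`,
`Des_k(w) = Des_k(D_i^{(k)}(w))` and `|Inv_k(w)| = |Inv_k(D_i^{(k)}(w))|`; in
particular, `Des_k` and `|Inv_k|` are constant on `k`-equivalence classes. -/
theorem Dk_preserves_desk_invk (k : ℕ) (hk : 1 ≤ k) (n : ℕ) (l : List ℕ)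
    (hl : l.Perm (List.range' 1 n)) (i : ℕ) (hi : 2 ≤ i) (hi2 : i + 1 ≤ n)
    (hnb : NotBetween l i) :
    (DesKF k n (wf l) = DesKF k n (wf (DMap k l i)) ∧
      (InvKF k n (wf l)).card = (InvKF k n (wf (DMap k l i))).card) ∧
    ∀ u : List ℕ, EquivK k l u →
      DesKF k n (wf l) = DesKF k n (wf u) ∧
        (InvKF k n (wf l)).card = (InvKF k n (wf u)).card :=
  Dk_preserves_desk_invk_general k n l hl i hi hi2 hnb
end
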